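/- Let N ≥ 3 be an integer, s ∈ (0, 1/2] with N > 4s + 1, and M > 0. Define F : ℝ^N × (0,∞) → [0,∞] by F(y,t) = ∫_{ℝ^N} t^{2s−1} (|y−x| + t)^{−(N+2s)} (1+|x|)^{−(N−2s)} dx. Then the double integral ∫_M^∞ ∫_{ℝ^N} t^{1−2s} F(y,t)² (1+|y|+t) dy dt is finite. -/

import Mathlib

/-!
Write `S = 1 + |y| + t`. Since `|y| ≤ |y - x| + |x|`, one of `|y - x| + t` and `1 + |x|` is at
least `S / 2`; spending the decay of that factor on `S` (and, for `t ≥ M`, trading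
`(|y - x| + t)^{-s}` for `t^{-s}`) bounds the kernel by `C t^{s-1} S^{2s-n}` times
`(1 + |y - x|)^{-(n+s)} + (1 + |x|)^{-(n+s)}`, whose `x`-integral is finite and independent of `y`.
Hence the integrand is at most a constant times `t^{-1} S^{-(2n-4s-1)}`, and splitting
`S^{-(2n-4s-1)} ≤ t^{-δ} (1 + |y|)^{-(n+δ)}` with `δ = (n - 4s - 1)/2 > 0` leaves the product
of two convergent integrals.
-/

open MeasureTheory ENNReal

lemma rpow_neg_le_two_rpow_mul {a S p : ℝ} (hS : 0 < S) (ha : S / 2 ≤ a) (hp : 0 ≤ p) :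
    a ^ (-p) ≤ 2 ^ p * S ^ (-p) :=
  calc a ^ (-p) ≤ (S / 2) ^ (-p) := Real.rpow_le_rpow_of_nonpos (by positivity) ha (by linarith)
    _ = 2 ^ p * S ^ (-p) := by
      rw [Real.div_rpow hS.le zero_le_two, Real.rpow_neg zero_le_two, div_inv_eq_mul, mul_comm]

lemma rpow_neg_add_le_mul {a b S p q : ℝ} (ha : 0 < a) (haS : a ≤ S) (hb : 0 < b)
    (hbS : b ≤ S) (hp : 0 ≤ p) (hq : 0 ≤ q) : S ^ (-(p + q)) ≤ a ^ (-p) * b ^ (-q) := by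
  have hS : 0 < S := ha.trans_le haS
  rw [neg_add, Real.rpow_add hS]
  exact mul_le_mul (Real.rpow_le_rpow_of_nonpos ha haS (by linarith))
    (Real.rpow_le_rpow_of_nonpos hb hbS (by linarith)) (by positivity) (by positivity)

section Kernel

variable {n s M t u v S : ℝ}

lemma add_rpow_neg_le (hM : 0 < M) (ht : M ≤ t) (hu : 0 ≤ u) (hs : 0 ≤ s)
    (hsn : 0 ≤ n + s) :
    (u + t) ^ (-(n + 2 * s)) ≤ t ^ (-s) * ((min 1 M) ^ (-(n + s)) * (1 + u) ^ (-(n + s))) := by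
  have ht0 : 0 < t := hM.trans_le ht
  have hc : 0 < min 1 M := lt_min one_pos hM
  have hcu : min 1 M * (1 + u) ≤ u + t := by
    nlinarith [min_le_left 1 M, min_le_right 1 M]
  rw [show -(n + 2 * s) = -s + -(n + s) by ring, Real.rpow_add (by positivity),
    ← Real.mul_rpow hc.le (by positivity)]
  exact mul_le_mul (Real.rpow_le_rpow_of_nonpos ht0 (by linarith) (by linarith))
    (Real.rpow_le_rpow_of_nonpos (by positivity) hcu (by linarith)) (by positivity) (by positivity)

lemma kernel_le_of_half_le_one_add (hM : 0 < M) (ht : M ≤ t) (hu : 0 ≤ u) (hS : 0 < S)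
    (hv : S / 2 ≤ 1 + v) (hs : 0 ≤ s) (hsn : 2 * s ≤ n) :
    t ^ (2 * s - 1) * (u + t) ^ (-(n + 2 * s)) * (1 + v) ^ (-(n - 2 * s)) ≤
      2 ^ (n - 2 * s) * (min 1 M) ^ (-(n + s)) * (t ^ (s - 1) * S ^ (2 * s - n)) *
        (1 + u) ^ (-(n + s)) := by
  have ht0 : 0 < t := hM.trans_le ht
  have hv0 : 0 < 1 + v := by linarith
  calc t ^ (2 * s - 1) * (u + t) ^ (-(n + 2 * s)) * (1 + v) ^ (-(n - 2 * s))
      ≤ t ^ (2 * s - 1) * (t ^ (-s) * ((min 1 M) ^ (-(n + s)) * (1 + u) ^ (-(n + s)))) *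
          (2 ^ (n - 2 * s) * S ^ (-(n - 2 * s))) := by
        gcongr
        · exact add_rpow_neg_le hM ht hu hs (by linarith)
        · exact rpow_neg_le_two_rpow_mul hS hv (by linarith)
    _ = _ := by
        rw [show s - 1 = (2 * s - 1) + -s by ring, Real.rpow_add ht0,
          show 2 * s - n = -(n - 2 * s) by ring]
        ring

lemma kernel_le_of_one_add_le (ht0 : 0 < t) (htS : t ≤ S) (hu : S / 2 ≤ u + t) (hv : 0 ≤ v)
    (hvS : 1 + v ≤ S) (hs : 0 ≤ s) (hsn : 0 ≤ n + 2 * s) :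
    t ^ (2 * s - 1) * (u + t) ^ (-(n + 2 * s)) * (1 + v) ^ (-(n - 2 * s)) ≤
      2 ^ (n + 2 * s) * (t ^ (s - 1) * S ^ (2 * s - n)) * (1 + v) ^ (-(n + s)) := by
  have hS : 0 < S := ht0.trans_le htS
  have hut : 0 < u + t := by linarith
  calc t ^ (2 * s - 1) * (u + t) ^ (-(n + 2 * s)) * (1 + v) ^ (-(n - 2 * s))
      = t ^ (s - 1) * t ^ s * (u + t) ^ (-(n + 2 * s)) *
          ((1 + v) ^ (3 * s) * (1 + v) ^ (-(n + s))) := by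
        rw [← Real.rpow_add ht0, ← Real.rpow_add (by linarith)]
        ring_nf
    _ ≤ t ^ (s - 1) * S ^ s * (2 ^ (n + 2 * s) * S ^ (-(n + 2 * s))) *
          (S ^ (3 * s) * (1 + v) ^ (-(n + s))) := by
        gcongr
        exact rpow_neg_le_two_rpow_mul hS hu hsn
    _ = _ := by
        rw [show 2 * s - n = s + (-(n + 2 * s) + 3 * s) by ring, Real.rpow_add hS,
          Real.rpow_add hS]
        ring

noncomputable def kernelConst (n s M : ℝ) : ℝ :=
  2 ^ (n - 2 * s) * (min 1 M) ^ (-(n + s)) + 2 ^ (n + 2 * s)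

lemma kernelConst_nonneg (n s M : ℝ) (hM : 0 < M) : 0 ≤ kernelConst n s M := by
  have := lt_min one_pos hM
  unfold kernelConst; positivity

lemma kernel_le {w : ℝ} (hM : 0 < M) (ht : M ≤ t) (hu : 0 ≤ u) (hv : 0 ≤ v) (hw : 0 ≤ w)
    (hwuv : w ≤ u + v) (hs : 0 ≤ s) (hsn : 2 * s ≤ n) :
    t ^ (2 * s - 1) * (u + t) ^ (-(n + 2 * s)) * (1 + v) ^ (-(n - 2 * s)) ≤
      kernelConst n s M * (t ^ (s - 1) * (1 + w + t) ^ (2 * s - n)) *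
        ((1 + u) ^ (-(n + s)) + (1 + v) ^ (-(n + s))) := by
  have ht0 : 0 < t := hM.trans_le ht
  unfold kernelConst
  rcases le_or_gt ((1 + w + t) / 2) (1 + v) with hv' | hv'
  · calc _ ≤ _ := kernel_le_of_half_le_one_add hM ht hu (by positivity) hv' hs hsn
      _ ≤ _ := by
        gcongr ?_ * _ * ?_ <;> exact le_add_of_nonneg_right (by positivity)
  · calc _ ≤ _ := kernel_le_of_one_add_le (S := 1 + w + t) ht0 (by linarith) (by linarith) hv
          (by linarith) hs (by linarith)
      _ ≤ _ := by
        gcongr ?_ * _ * ?_ <;> exact le_add_of_nonneg_left (by positivity)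

lemma rpow_mul_sq_mul_le_rpow_mul_rpow {δ w : ℝ} (ht : 0 < t) (hw : 0 ≤ w) (hs : 0 ≤ s)
    (hδ : 0 ≤ δ) (hn : n = 4 * s + 1 + 2 * δ) :
    t ^ (1 - 2 * s) * (t ^ (s - 1) * (1 + w + t) ^ (2 * s - n)) ^ 2 * (1 + w + t) ≤
      t ^ (-1 - δ) * (1 + w) ^ (-(n + δ)) := by
  have hS : 0 < 1 + w + t := by positivity
  calc t ^ (1 - 2 * s) * (t ^ (s - 1) * (1 + w + t) ^ (2 * s - n)) ^ 2 * (1 + w + t)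
      = t ^ (-1 : ℝ) * (1 + w + t) ^ (-(δ + (n + δ))) := by
        have ht' : t ^ (1 - 2 * s) * (t ^ (s - 1)) ^ 2 = t ^ (-1 : ℝ) := by
          rw [sq, ← mul_assoc, ← Real.rpow_add ht, ← Real.rpow_add ht]
          ring_nf
        have hS' : ((1 + w + t) ^ (2 * s - n)) ^ 2 * (1 + w + t) =
            (1 + w + t) ^ (-(δ + (n + δ))) := by
          rw [sq, ← Real.rpow_add hS, ← Real.rpow_add_one hS.ne', hn]
          ring_nf
        rw [← ht', ← hS']
        ring
    _ ≤ t ^ (-1 : ℝ) * (t ^ (-δ) * (1 + w) ^ (-(n + δ))) := by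
        gcongr
        exact rpow_neg_add_le_mul ht (by linarith) (by positivity) (by linarith) hδ (by linarith)
    _ = t ^ (-1 - δ) * (1 + w) ^ (-(n + δ)) := by
        rw [sub_eq_add_neg, Real.rpow_add ht, mul_assoc]

end Kernel

section Integral

variable {E : Type*} [NormedAddCommGroup E] [MeasurableSpace E] [BorelSpace E]
  (μ : Measure E) [μ.IsAddRightInvariant] {n s M t : ℝ}

lemma lintegral_norm_sub_left (g : ℝ → ℝ≥0∞) (y : E) :
    ∫⁻ x, g ‖y - x‖ ∂μ = ∫⁻ x, g ‖x‖ ∂μ := by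
  simp_rw [norm_sub_rev y]
  exact lintegral_sub_right_eq_self (fun x ↦ g ‖x‖) y

lemma lintegral_kernel_le (hM : 0 < M) (ht : M ≤ t) (hs : 0 ≤ s) (hsn : 2 * s ≤ n) (y : E) :
    ∫⁻ x, ENNReal.ofReal (t ^ (2 * s - 1) * (‖y - x‖ + t) ^ (-(n + 2 * s)) *
        (1 + ‖x‖) ^ (-(n - 2 * s))) ∂μ ≤
      ENNReal.ofReal (kernelConst n s M * (t ^ (s - 1) * (1 + ‖y‖ + t) ^ (2 * s - n))) *
        (2 * ∫⁻ x, ENNReal.ofReal ((1 + ‖x‖) ^ (-(n + s))) ∂μ) := by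
  have ht0 : 0 < t := hM.trans_le ht
  have hC := kernelConst_nonneg n s M hM
  calc _ ≤ ∫⁻ x, ENNReal.ofReal
            (kernelConst n s M * (t ^ (s - 1) * (1 + ‖y‖ + t) ^ (2 * s - n))) *
          (ENNReal.ofReal ((1 + ‖y - x‖) ^ (-(n + s))) +
            ENNReal.ofReal ((1 + ‖x‖) ^ (-(n + s)))) ∂μ := by
        refine lintegral_mono fun x ↦ ?_
        rw [← ENNReal.ofReal_add (by positivity) (by positivity),
          ← ENNReal.ofReal_mul (by positivity)]
        exact ENNReal.ofReal_le_ofReal <| kernel_le hM ht (norm_nonneg _) (norm_nonneg _)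
          (norm_nonneg _) (norm_le_norm_sub_add y x) hs hsn
    _ = _ := by
        rw [lintegral_const_mul' _ _ ENNReal.ofReal_ne_top, lintegral_add_left (by fun_prop),
          lintegral_norm_sub_left μ (fun r ↦ ENNReal.ofReal ((1 + r) ^ (-(n + s)))) y]
        exact congrArg _ (two_mul _).symm

lemma weighted_sq_lintegral_kernel_le {δ : ℝ} (hM : 0 < M) (ht : M ≤ t) (hs : 0 ≤ s)
    (hδ : 0 ≤ δ) (hn : n = 4 * s + 1 + 2 * δ) (y : E) :
    ENNReal.ofReal (t ^ (1 - 2 * s)) *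
        (∫⁻ x, ENNReal.ofReal (t ^ (2 * s - 1) * (‖y - x‖ + t) ^ (-(n + 2 * s)) *
          (1 + ‖x‖) ^ (-(n - 2 * s))) ∂μ) ^ 2 * ENNReal.ofReal (1 + ‖y‖ + t) ≤
      (2 * (∫⁻ x, ENNReal.ofReal ((1 + ‖x‖) ^ (-(n + s))) ∂μ) *
          ENNReal.ofReal (kernelConst n s M)) ^ 2 *
        ENNReal.ofReal (t ^ (-1 - δ)) * ENNReal.ofReal ((1 + ‖y‖) ^ (-(n + δ))) := by
  have ht0 : 0 < t := hM.trans_le ht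
  have hC := kernelConst_nonneg n s M hM
  set K := ∫⁻ x, ENNReal.ofReal ((1 + ‖x‖) ^ (-(n + s))) ∂μ
  have hP : 0 ≤ t ^ (s - 1) * (1 + ‖y‖ + t) ^ (2 * s - n) := by positivity
  calc _ ≤ ENNReal.ofReal (t ^ (1 - 2 * s)) * (ENNReal.ofReal (kernelConst n s M *
            (t ^ (s - 1) * (1 + ‖y‖ + t) ^ (2 * s - n))) * (2 * K)) ^ 2 *
          ENNReal.ofReal (1 + ‖y‖ + t) := by
        gcongr
        exact lintegral_kernel_le μ hM ht hs (by linarith) y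
    _ = (2 * K * ENNReal.ofReal (kernelConst n s M)) ^ 2 * ENNReal.ofReal
          (t ^ (1 - 2 * s) * (t ^ (s - 1) * (1 + ‖y‖ + t) ^ (2 * s - n)) ^ 2 *
            (1 + ‖y‖ + t)) := by
        generalize t ^ (s - 1) * (1 + ‖y‖ + t) ^ (2 * s - n) = P at hP ⊢
        have htP : 0 ≤ t ^ (1 - 2 * s) * P ^ 2 := by positivity
        rw [ENNReal.ofReal_mul htP, ENNReal.ofReal_mul (by positivity : 0 ≤ t ^ (1 - 2 * s)),
          ENNReal.ofReal_pow hP, ENNReal.ofReal_mul hC]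
        ring
    _ ≤ (2 * K * ENNReal.ofReal (kernelConst n s M)) ^ 2 *
          ENNReal.ofReal (t ^ (-1 - δ) * (1 + ‖y‖) ^ (-(n + δ))) :=
        mul_le_mul_right (ENNReal.ofReal_le_ofReal
          (rpow_mul_sq_mul_le_rpow_mul_rpow ht0 (norm_nonneg y) hs hδ hn)) _
    _ = _ := by
        rw [ENNReal.ofReal_mul (by positivity)]
        exact (mul_assoc _ _ _).symm

end Integral

theorem stmt_14 (N : ℕ) (s : ℝ) (hs0 : 0 < s)
    (hNs : 4 * s + 1 < N) (M : ℝ) (hM : 0 < M) :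
    (∫⁻ t in Set.Ioi M, ∫⁻ y : EuclideanSpace ℝ (Fin N),
        ENNReal.ofReal (t ^ (1 - 2 * s)) *
          (∫⁻ x : EuclideanSpace ℝ (Fin N),
            ENNReal.ofReal (t ^ (2 * s - 1) * (‖y - x‖ + t) ^ (-((N : ℝ) + 2 * s)) *
              (1 + ‖x‖) ^ (-((N : ℝ) - 2 * s)))) ^ 2 *
          ENNReal.ofReal (1 + ‖y‖ + t)) < ⊤ := by
  set δ : ℝ := (N - 4 * s - 1) / 2
  have hδ : 0 < δ := by simp only [δ]; linarith
  set C := (2 * (∫⁻ x : EuclideanSpace ℝ (Fin N),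
    ENNReal.ofReal ((1 + ‖x‖) ^ (-(N + s)))) * ENNReal.ofReal (kernelConst N s M)) ^ 2
  have hK := finite_integral_one_add_norm (E := EuclideanSpace ℝ (Fin N)) (μ := volume)
    (r := N + s) (by rw [finrank_euclideanSpace_fin]; linarith)
  have hL := finite_integral_one_add_norm (E := EuclideanSpace ℝ (Fin N)) (μ := volume)
    (r := N + δ) (by rw [finrank_euclideanSpace_fin]; linarith)
  have hT := (integrableOn_Ioi_rpow_of_lt (by linarith : -1 - δ < -1) hM).setLIntegral_lt_top
  calc _ ≤ ∫⁻ t in Set.Ioi M, ∫⁻ y : EuclideanSpace ℝ (Fin N),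
          C * ENNReal.ofReal (t ^ (-1 - δ)) * ENNReal.ofReal ((1 + ‖y‖) ^ (-(N + δ))) :=
        setLIntegral_mono' measurableSet_Ioi fun t ht ↦ lintegral_mono fun y ↦
          weighted_sq_lintegral_kernel_le volume hM (le_of_lt ht) hs0.le hδ.le
            (by simp only [δ]; ring) y
    _ = C * (∫⁻ t in Set.Ioi M, ENNReal.ofReal (t ^ (-1 - δ))) *
          ∫⁻ y : EuclideanSpace ℝ (Fin N), ENNReal.ofReal ((1 + ‖y‖) ^ (-(N + δ))) := by
        rw [lintegral_lintegral_mul (by fun_prop) (by fun_prop), lintegral_const_mul' _ _ ?_]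
        finiteness
    _ < ⊤ := by finiteness
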